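/- Let (A, α, S) be a garden and let 𝕊 be its largest healthy set of flowers, with the restricted flower transition relation and projection proj(p, a, F) = p. Let □_proj, ◇_proj be the operators on O(S) lifted along proj. Then α(□_A(x)) ⊆ □_proj(α(x)) and α(◇_A(x)) ⊆ ◇_proj(α(x)) for all x ∈ A; equivalently, proj⁻¹(α(□_A(x))) ⊆ □_𝕊(proj⁻¹(α(x))) and proj⁻¹(α(◇_A(x))) ⊆ ◇_𝕊(proj⁻¹(α(x))) for all x ∈ A. -/
import Mathlib


open Set TopologicalSpace

namespace Paper

/-- A filter of a frame: a nonempty upward-closed subset closed under binary meets. -/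
def IsFrameFilter {A : Type*} [Order.Frame A] (F : Set A) : Prop :=
  F.Nonempty ∧ (∀ x ∈ F, ∀ y, x ≤ y → y ∈ F) ∧ ∀ x ∈ F, ∀ y ∈ F, x ⊓ y ∈ F

/-- A bed structure: a `□`-operator together with a companion `◇`-operator. -/
def IsBed {A : Type*} [Order.Frame A] (bx dm : A → A) : Prop :=
  Monotone bx ∧ bx ⊤ = ⊤ ∧ (∀ x y, bx (x ⊓ y) = bx x ⊓ bx y) ∧
  Monotone dm ∧ ∀ x y, bx x ⊓ dm y ≤ dm (x ⊓ y)

variable {A : Type*} [Order.Frame A] {S : Type*} [TopologicalSpace S]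

/-- `∇(p) = {x | p ∈ α(x)}`. -/
def Nabla (α : FrameHom A (Opens S)) (p : S) : Set A := {x | p ∈ α x}

/-- `P□(p) = {x | □(x) ∈ ∇(p)}`. -/
def PBox (bx : A → A) (α : FrameHom A (Opens S)) (p : S) : Set A :=
  {x | p ∈ α (bx x)}

/-- `P◇(p) = {x | ◇(x) ∉ ∇(p)}`. -/
def PDia (dm : A → A) (α : FrameHom A (Opens S)) (p : S) : Set A :=
  {x | p ∉ α (dm x)}

/-- A flower of a garden: a triple `(p, a, F)` with `F` a filter, `a ∈ P◇(p)` and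
`P□(p) ⊆ F`. -/
def IsFlower (bx dm : A → A) (α : FrameHom A (Opens S)) (P : S × A × Set A) : Prop :=
  IsFrameFilter P.2.2 ∧ P.2.1 ∈ PDia dm α P.1 ∧ PBox bx α P.1 ⊆ P.2.2

/-- The transition relation on flowers: `(p,a,F) → (q,b,G)` iff `a ∉ ∇(q)` and
`F ⊆ ∇(q)`. -/
def FTrans (α : FrameHom A (Opens S)) (P Q : S × A × Set A) : Prop :=
  P.2.1 ∉ Nabla α Q.1 ∧ P.2.2 ⊆ Nabla α Q.1

/-- A healthy set of flowers. -/
def Healthy (bx dm : A → A) (α : FrameHom A (Opens S)) (H : Set (S × A × Set A)) : Prop :=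
  (∀ P ∈ H, IsFlower bx dm α P) ∧
  (∀ P ∈ H, ∀ x, x ∉ P.2.2 → ∃ Q ∈ H, FTrans α P Q ∧ x ∉ Nabla α Q.1) ∧
  (∀ P ∈ H, ∀ x, ¬ x ≤ P.2.1 → ∃ Q ∈ H, FTrans α P Q ∧ x ∈ Nabla α Q.1)

/-- The largest healthy set of flowers: the union of all healthy sets. -/
def MaxHealthy (bx dm : A → A) (α : FrameHom A (Opens S)) : Set (S × A × Set A) :=
  ⋃₀ {H | Healthy bx dm α H}

/-- The right adjoint of a frame homomorphism. -/
def rAdj {B : Type*} [Order.Frame B] (f : FrameHom B A) (a : A) : B :=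
  sSup {b | f b ≤ a}

/-- The right adjoint of a covering morphism `α : A → O(S)`. -/
def rAdjO (α : FrameHom A (Opens S)) (U : Opens S) : A :=
  sSup {x | α x ≤ U}

/-- The box operator induced by a transition relation: `box r E = {P | P^→ ⊆ E}`. -/
def box {X : Type*} (r : X → X → Prop) (E : Set X) : Set X :=
  {P | ∀ Q, r P Q → Q ∈ E}

/-- The diamond operator induced by a transition relation: `dia r E = {P | P^→ meets E}`. -/
def dia {X : Type*} (r : X → X → Prop) (E : Set X) : Set X :=
  {P | ∃ Q, r P Q ∧ Q ∈ E}

/-- The lifted box operator on opens of `S` along a valuation `σ`. -/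
def liftBox {X S' : Type*} [TopologicalSpace S'] (r : X → X → Prop) (σ : X → S')
    (U : Set S') : Set S' :=
  ⋃₀ {V | IsOpen V ∧ σ ⁻¹' V ⊆ box r (σ ⁻¹' U)}

/-- The lifted diamond operator on opens of `S` along a valuation `σ`. -/
def liftDia {X S' : Type*} [TopologicalSpace S'] (r : X → X → Prop) (σ : X → S')
    (U : Set S') : Set S' :=
  ⋃₀ {V | IsOpen V ∧ σ ⁻¹' V ⊆ dia r (σ ⁻¹' U)}

/-- For a garden `(A, α, S)` with `𝕊` its largest healthy set of flowers and
`proj(p,a,F) = p`, the covering morphism `α` is a bed morphism into the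
harvest-induced operators on `O(S)`: `α(□_A x) ⊆ □_proj(α x)` and
`α(◇_A x) ⊆ ◇_proj(α x)`, equivalently the preimage inclusions hold. -/
theorem cover_is_bed_morphism {A S : Type*} [Order.Frame A] [TopologicalSpace S]
    (bx dm : A → A) (hbed : IsBed bx dm)
    (α : FrameHom A (Opens S)) (hα : Function.Surjective α) :
    ∀ x : A,
      ((α (bx x) : Set S) ⊆
        liftBox (fun P Q : ↥(MaxHealthy bx dm α) => FTrans α P.1 Q.1)
          (fun P : ↥(MaxHealthy bx dm α) => P.1.1) ((α x : Set S))) ∧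
      ((α (dm x) : Set S) ⊆
        liftDia (fun P Q : ↥(MaxHealthy bx dm α) => FTrans α P.1 Q.1)
          (fun P : ↥(MaxHealthy bx dm α) => P.1.1) ((α x : Set S))) ∧
      ((fun P : ↥(MaxHealthy bx dm α) => P.1.1) ⁻¹' ((α (bx x) : Set S)) ⊆
        box (fun P Q : ↥(MaxHealthy bx dm α) => FTrans α P.1 Q.1)
          ((fun P : ↥(MaxHealthy bx dm α) => P.1.1) ⁻¹' ((α x : Set S)))) ∧
      ((fun P : ↥(MaxHealthy bx dm α) => P.1.1) ⁻¹' ((α (dm x) : Set S)) ⊆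
        dia (fun P Q : ↥(MaxHealthy bx dm α) => FTrans α P.1 Q.1)
          ((fun P : ↥(MaxHealthy bx dm α) => P.1.1) ⁻¹' ((α x : Set S)))) := by
  intro x
  have key_box : ∀ P : ↥(MaxHealthy bx dm α), P.1.1 ∈ α (bx x) →
      ∀ Q : ↥(MaxHealthy bx dm α), FTrans α P.1 Q.1 → Q.1.1 ∈ α x := by
    intro P hp Q hPQ
    obtain ⟨H, hH, hPH⟩ := P.2
    have hfl := hH.1 _ hPH
    have hx : x ∈ P.1.2.2 := hfl.2.2 hp
    exact hPQ.2 hx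
  have key_dia : ∀ P : ↥(MaxHealthy bx dm α), P.1.1 ∈ α (dm x) →
      ∃ Q : ↥(MaxHealthy bx dm α), FTrans α P.1 Q.1 ∧ Q.1.1 ∈ α x := by
    intro P hp
    obtain ⟨H, hH, hPH⟩ := P.2
    have hfl := hH.1 _ hPH
    have hxa : ¬ x ≤ P.1.2.1 := by
      intro hle
      have hmono : α (dm x) ≤ α (dm P.1.2.1) :=
        OrderHomClass.mono α (hbed.2.2.2.1 hle)
      exact hfl.2.1 (hmono hp)
    obtain ⟨Q, hQH, htr, hq⟩ := hH.2.2 _ hPH x hxa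
    exact ⟨⟨Q, Set.mem_sUnion.2 ⟨H, hH, hQH⟩⟩, htr, hq⟩
  refine ⟨?_, ?_, fun P hP Q hPQ => key_box P hP Q hPQ, fun P hP => key_dia P hP⟩
  · intro p hp
    exact ⟨(α (bx x) : Set S), ⟨(α (bx x)).2, fun P hP Q hPQ => key_box P hP Q hPQ⟩, hp⟩
  · intro p hp
    exact ⟨(α (dm x) : Set S), ⟨(α (dm x)).2, fun P hP => key_dia P hP⟩, hp⟩
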